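/- For any g × g complex symmetric matrix τ with positive definite imaginary part, any z ∈ ℂ^g, and any λ, μ ∈ ℤ^g, the Riemann theta function θ(z, τ) = Σ_{m ∈ ℤ^g} exp(πi mᵀ τ m + 2πi mᵀ z) satisfies θ(z + τλ + μ, τ) = exp(-2πi λᵀ z - πi λᵀ τ λ) · θ(z, τ). -/

import Mathlib

open Matrix

/-- The Riemann theta function. -/
noncomputable def theta {g : ℕ} (z : Fin g → ℂ) (τ : Matrix (Fin g) (Fin g) ℂ) : ℂ :=
  ∑' m : Fin g → ℤ,
    Complex.exp (Real.pi * Complex.I *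
        ((fun i => (m i : ℂ)) ⬝ᵥ τ.mulVec (fun i => (m i : ℂ))) +
      2 * Real.pi * Complex.I * ((fun i => (m i : ℂ)) ⬝ᵥ z))

/-! Completing the square with `τ` symmetric, the `m`-th term of the theta series at
`z + τ l + μ` is `exp(-2πi lᵀz - πi lᵀτl)` times the `(m + l)`-th term at `z`, the remaining
factor `exp(2πi mᵀμ)` being `1`; the identity follows by reindexing the sum along the bijection
`m ↦ m + l` of `ℤ^g`. -/

namespace Matrix.IsSymm

variable {n α : Type*} [Fintype n] [CommSemiring α] {A : Matrix n n α}

theorem dotProduct_mulVec_comm (hA : A.IsSymm) (x y : n → α) :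
    x ⬝ᵥ A *ᵥ y = y ⬝ᵥ A *ᵥ x := by
  rw [dotProduct_mulVec, ← mulVec_transpose, hA.eq, dotProduct_comm]

theorem add_dotProduct_mulVec_add (hA : A.IsSymm) (x y : n → α) :
    (x + y) ⬝ᵥ A *ᵥ (x + y) = x ⬝ᵥ A *ᵥ x + 2 * (x ⬝ᵥ A *ᵥ y) + y ⬝ᵥ A *ᵥ y := by
  rw [mulVec_add, dotProduct_add, add_dotProduct, add_dotProduct,
    hA.dotProduct_mulVec_comm y x]
  ring

end Matrix.IsSymm

noncomputable def thetaTerm {g : ℕ} (z : Fin g → ℂ) (τ : Matrix (Fin g) (Fin g) ℂ)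
    (m : Fin g → ℤ) : ℂ :=
  Complex.exp (Real.pi * Complex.I *
      ((fun i => (m i : ℂ)) ⬝ᵥ τ.mulVec (fun i => (m i : ℂ))) +
    2 * Real.pi * Complex.I * ((fun i => (m i : ℂ)) ⬝ᵥ z))

theorem theta_eq_tsum_thetaTerm {g : ℕ} (z : Fin g → ℂ) (τ : Matrix (Fin g) (Fin g) ℂ) :
    theta z τ = ∑' m, thetaTerm z τ m :=
  rfl

theorem thetaTerm_add_mulVec_add {g : ℕ} {τ : Matrix (Fin g) (Fin g) ℂ} (hτ : τ.IsSymm)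
    (z : Fin g → ℂ) (l μ m : Fin g → ℤ) :
    thetaTerm (fun i => z i + τ.mulVec (fun j => (l j : ℂ)) i + (μ i : ℂ)) τ m =
      Complex.exp (-(2 * Real.pi * Complex.I * ((fun i => (l i : ℂ)) ⬝ᵥ z)) -
          Real.pi * Complex.I * ((fun i => (l i : ℂ)) ⬝ᵥ τ.mulVec (fun i => (l i : ℂ)))) *
        thetaTerm z τ (m + l) := by
  set a : Fin g → ℂ := fun i => (m i : ℂ)
  set b : Fin g → ℂ := fun i => (l i : ℂ)
  set c : Fin g → ℂ := fun i => (μ i : ℂ)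
  have hcast : (fun i => (((m + l) i : ℤ) : ℂ)) = a + b := by
    funext i
    simp [a, b]
  have hac : a ⬝ᵥ c = ((m ⬝ᵥ μ : ℤ) : ℂ) := by
    simp [dotProduct, a, c]
  have hexponent : (Real.pi : ℂ) * Complex.I * (a ⬝ᵥ τ *ᵥ a) +
      2 * Real.pi * Complex.I * (a ⬝ᵥ (z + τ *ᵥ b + c)) =
      (-(2 * Real.pi * Complex.I * (b ⬝ᵥ z)) - Real.pi * Complex.I * (b ⬝ᵥ τ *ᵥ b) +
        (Real.pi * Complex.I * ((a + b) ⬝ᵥ τ *ᵥ (a + b)) +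
          2 * Real.pi * Complex.I * ((a + b) ⬝ᵥ z))) +
      ((m ⬝ᵥ μ : ℤ) : ℂ) * (2 * Real.pi * Complex.I) := by
    rw [hτ.add_dotProduct_mulVec_add, dotProduct_add, dotProduct_add, add_dotProduct, hac]
    ring
  rw [thetaTerm, thetaTerm, hcast, ← Complex.exp_add]
  change Complex.exp (_ + 2 * Real.pi * Complex.I * (a ⬝ᵥ (z + τ *ᵥ b + c))) = _
  rw [hexponent, Complex.exp_add, Complex.exp_int_mul_two_pi_mul_I, mul_one]

theorem stmt5_general (g : ℕ)
    (τ : Matrix (Fin g) (Fin g) ℂ) (hτ : τ.IsSymm)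
    (z : Fin g → ℂ) (l μ : Fin g → ℤ) :
    theta (fun i => z i + τ.mulVec (fun j => (l j : ℂ)) i + (μ i : ℂ)) τ =
      Complex.exp (-(2 * Real.pi * Complex.I * ((fun i => (l i : ℂ)) ⬝ᵥ z)) -
          Real.pi * Complex.I *
            ((fun i => (l i : ℂ)) ⬝ᵥ τ.mulVec (fun i => (l i : ℂ)))) *
        theta z τ := by
  rw [theta_eq_tsum_thetaTerm, theta_eq_tsum_thetaTerm, ← tsum_mul_left]
  conv_rhs => rw [← (Equiv.addRight l).tsum_eq]
  exact tsum_congr fun m => thetaTerm_add_mulVec_add hτ z l μ m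

theorem stmt5 (g : ℕ) (hg : 1 ≤ g)
    (τ : Matrix (Fin g) (Fin g) ℂ) (hτ : τ.IsSymm)
    (hpos : (Matrix.of fun i j => (τ i j).im).PosDef)
    (z : Fin g → ℂ) (l μ : Fin g → ℤ) :
    theta (fun i => z i + τ.mulVec (fun j => (l j : ℂ)) i + (μ i : ℂ)) τ =
      Complex.exp (-(2 * Real.pi * Complex.I * ((fun i => (l i : ℂ)) ⬝ᵥ z)) -
          Real.pi * Complex.I *
            ((fun i => (l i : ℂ)) ⬝ᵥ τ.mulVec (fun i => (l i : ℂ)))) *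
        theta z τ :=
  stmt5_general g τ hτ z l μ
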